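/- arXiv:0807.4542 — 2 statements merged into one kernel-verified Lean document; each statement's English description precedes it below -/
import Mathlib

section
/- Let n ≥ 3. The Lie subalgebra sim(n−2) = {X ∈ so(n−1,1) : Xℓ ∈ ℝℓ} is a maximal proper Lie subalgebra of so(n−1,1): sim(n−2) ≠ so(n−1,1), and every Lie subalgebra h of so(n−1,1) with sim(n−2) ⊆ h satisfies h = sim(n−2) or h = so(n−1,1). -/
/-!
Write `⟪x, y⟫ = xᵀ J y` and pick `m` with `⟪l, m⟫ = 1` (for `J = η` take `m = η l / |l|²`).
Every `Z ∈ so(J)` differs from an element of `sim` by the rotation `m ∧ w`, where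
`w = Zl - ⟪Zl, m⟫ l` is orthogonal to `l` and `m`. If a subalgebra `h ⊇ sim` contains some
`X ∉ sim`, then `m ∧ w₀ ∈ h` for a non-zero `w₀ ⊥ l, m`; for the Minkowski form `{l, m}^⊥` is
positive definite, so `⟪w₀, w₀⟫ ≠ 0`. Bracketing `m ∧ w₀` with `x ∧ w₀ ∈ sim` gives
`⟪w₀, w₀⟫ (m ∧ x)` modulo `m ∧ w₀`, so `h` contains every `m ∧ x` with `x ⊥ l, m`, hence all of
`so(J)`. Conversely `m ∧ w` moves `l` off its line for any non-zero `w ⊥ l, m`, and such `w`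
exist once `n ≥ 3`.
-/

open Matrix

attribute [local instance] LieRing.ofAssociativeRing

/-- The Minkowski bilinear form on `ℝⁿ`, given by the diagonal matrix `diag(-1,1,…,1)`. -/
noncomputable def minkMat (n : ℕ) : Matrix (Fin n) (Fin n) ℝ :=
  Matrix.diagonal (fun i => if (i : ℕ) = 0 then (-1 : ℝ) else 1)

/-- The Lorentz Lie algebra `so(n-1,1)`, as a set of `n × n` real matrices. -/
def soSet (n : ℕ) : Set (Matrix (Fin n) (Fin n) ℝ) :=
  {X | Xᵀ * minkMat n + minkMat n * X = 0}

/-- The set `sim(n-2) = {X ∈ so(n-1,1) : Xℓ ∈ ℝℓ}`, the stabilizer of the null line `ℝℓ`. -/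
def simSet (n : ℕ) (l : Fin n → ℝ) : Set (Matrix (Fin n) (Fin n) ℝ) :=
  {X | X ∈ soSet n ∧ ∃ c : ℝ, X.mulVec l = c • l}

lemma exists_ne_zero_dotProduct_eq_zero_and_dotProduct_eq_zero {ι K : Type*} [Fintype ι] [Field K]
    (hι : 2 < Fintype.card ι) (a b : ι → K) : ∃ x ≠ 0, x ⬝ᵥ a = 0 ∧ x ⬝ᵥ b = 0 := by
  have hker : LinearMap.ker (of ![a, b]).mulVecLin ≠ ⊥ :=
    LinearMap.ker_ne_bot_of_finrank_lt (by simpa using hι)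
  obtain ⟨x, hx, hx0⟩ := (Submodule.ne_bot_iff _).mp hker
  have hxa := congrFun (LinearMap.mem_ker.mp hx) 0
  have hxb := congrFun (LinearMap.mem_ker.mp hx) 1
  simp only [mulVecLin_apply, mulVec, of_apply] at hxa hxb
  exact ⟨x, hx0, by simpa [dotProduct_comm] using hxa, by simpa [dotProduct_comm] using hxb⟩

namespace Matrix

section CommRing

variable {ι R : Type*} [Fintype ι] [CommRing R] {J : Matrix ι ι R}

lemma dotProduct_mulVec_comm_of_transpose_eq (hJ : Jᵀ = J) (x y : ι → R) :
    x ⬝ᵥ J *ᵥ y = y ⬝ᵥ J *ᵥ x := by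
  rw [← dotProduct_transpose_mulVec, hJ]

def wedge (J : Matrix ι ι R) (a b : ι → R) : Matrix ι ι R :=
  vecMulVec a (J *ᵥ b) - vecMulVec b (J *ᵥ a)

lemma wedge_mulVec (hJ : Jᵀ = J) (a b u : ι → R) :
    wedge J a b *ᵥ u = (b ⬝ᵥ J *ᵥ u) • a - (a ⬝ᵥ J *ᵥ u) • b := by
  simp only [wedge, sub_mulVec, vecMulVec_mulVec, op_smul_eq_smul]
  rw [dotProduct_comm (J *ᵥ b), dotProduct_comm (J *ᵥ a),
    dotProduct_mulVec_comm_of_transpose_eq hJ u, dotProduct_mulVec_comm_of_transpose_eq hJ u]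

lemma vecMulVec_mulVec_mul_vecMulVec_mulVec (hJ : Jᵀ = J) (a b c d : ι → R) :
    vecMulVec a (J *ᵥ b) * vecMulVec c (J *ᵥ d) = (b ⬝ᵥ J *ᵥ c) • vecMulVec a (J *ᵥ d) := by
  rw [vecMulVec_mul_vecMulVec, vecMulVec_smul, dotProduct_comm,
    dotProduct_mulVec_comm_of_transpose_eq hJ]

variable [DecidableEq ι]

lemma mem_skewAdjointMatricesLieSubalgebra_iff {X : Matrix ι ι R} :
    X ∈ skewAdjointMatricesLieSubalgebra J ↔ Xᵀ * J + J * X = 0 := by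
  rw [mem_skewAdjointMatricesLieSubalgebra, mem_skewAdjointMatricesSubmodule,
    Matrix.IsSkewAdjoint, Matrix.IsAdjointPair, mul_neg, ← add_eq_zero_iff_eq_neg]

lemma mulVec_dotProduct_mulVec_of_mem_skewAdjoint {X : Matrix ι ι R}
    (hX : X ∈ skewAdjointMatricesLieSubalgebra J) (u v : ι → R) :
    X *ᵥ u ⬝ᵥ J *ᵥ v = -(u ⬝ᵥ J *ᵥ X *ᵥ v) := by
  have hX' : Xᵀ * J = -(J * X) :=
    eq_neg_of_add_eq_zero_left (mem_skewAdjointMatricesLieSubalgebra_iff.mp hX)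
  rw [dotProduct_comm, ← dotProduct_transpose_mulVec, mulVec_mulVec, hX', neg_mulVec,
    dotProduct_neg, ← mulVec_mulVec]

def lineStabilizer (l : ι → R) : LieSubalgebra R (Matrix ι ι R) where
  carrier := {X | ∃ c : R, X *ᵥ l = c • l}
  zero_mem' := ⟨0, by simp⟩
  add_mem' := by
    rintro X Y ⟨c, hc⟩ ⟨d, hd⟩
    exact ⟨c + d, by rw [add_mulVec, hc, hd, add_smul]⟩
  smul_mem' := by
    rintro a X ⟨c, hc⟩
    exact ⟨a * c, by rw [smul_mulVec, hc, smul_smul]⟩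
  lie_mem' := by
    rintro X Y ⟨c, hc⟩ ⟨d, hd⟩
    refine ⟨0, ?_⟩
    rw [Ring.lie_def, sub_mulVec, ← mulVec_mulVec, ← mulVec_mulVec, hc, hd, mulVec_smul,
      mulVec_smul, hc, hd, smul_smul, smul_smul, mul_comm, sub_self, zero_smul]

lemma wedge_mem_skewAdjointMatricesLieSubalgebra (hJ : Jᵀ = J) (a b : ι → R) :
    wedge J a b ∈ skewAdjointMatricesLieSubalgebra J := by
  rw [mem_skewAdjointMatricesLieSubalgebra_iff, wedge, transpose_sub, transpose_vecMulVec,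
    transpose_vecMulVec, sub_mul, mul_sub, vecMulVec_mul, vecMulVec_mul, mul_vecMulVec,
    mul_vecMulVec]
  simp only [← mulVec_transpose, hJ]
  abel

lemma lie_wedge_wedge (hJ : Jᵀ = J) {m u v : ι → R} (hum : u ⬝ᵥ J *ᵥ m = 0)
    (hvm : v ⬝ᵥ J *ᵥ m = 0) (w : ι → R) :
    ⁅wedge J u v, wedge J m w⁆ = (v ⬝ᵥ J *ᵥ w) • wedge J m u - (u ⬝ᵥ J *ᵥ w) • wedge J m v := by
  have hmu : m ⬝ᵥ J *ᵥ u = 0 := by rwa [dotProduct_mulVec_comm_of_transpose_eq hJ]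
  have hmv : m ⬝ᵥ J *ᵥ v = 0 := by rwa [dotProduct_mulVec_comm_of_transpose_eq hJ]
  rw [Ring.lie_def]
  simp only [wedge, sub_mul, mul_sub, vecMulVec_mulVec_mul_vecMulVec_mulVec hJ, hum, hvm, hmu,
    hmv, dotProduct_mulVec_comm_of_transpose_eq hJ w, zero_smul, smul_sub]
  module

end CommRing

section Field

variable {ι K : Type*} [Fintype ι] [DecidableEq ι] [Field K] {J : Matrix ι ι K}

lemma mulVec_dotProduct_mulVec_self_of_mem_skewAdjoint [NeZero (2 : K)] (hJ : Jᵀ = J)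
    {X : Matrix ι ι K} (hX : X ∈ skewAdjointMatricesLieSubalgebra J) (u : ι → K) :
    X *ᵥ u ⬝ᵥ J *ᵥ u = 0 := by
  have h := mulVec_dotProduct_mulVec_of_mem_skewAdjoint hX u u
  rw [dotProduct_mulVec_comm_of_transpose_eq hJ u] at h
  have h2 : (2 : K) * (X *ᵥ u ⬝ᵥ J *ᵥ u) = 0 := by linear_combination h
  exact (mul_eq_zero.mp h2).resolve_left two_ne_zero

variable (hJ : Jᵀ = J) {l m : ι → K}
include hJ

lemma not_skewAdjointMatricesLieSubalgebra_le_lineStabilizer (hlm : l ⬝ᵥ J *ᵥ m = 1)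
    {w : ι → K} (hw : w ≠ 0) (hwl : w ⬝ᵥ J *ᵥ l = 0) (hwm : w ⬝ᵥ J *ᵥ m = 0) :
    ¬ skewAdjointMatricesLieSubalgebra J ≤ lineStabilizer l := by
  intro hle
  obtain ⟨c, hc⟩ := hle (wedge_mem_skewAdjointMatricesLieSubalgebra hJ m w)
  have hml : m ⬝ᵥ J *ᵥ l = 1 := by rwa [dotProduct_mulVec_comm_of_transpose_eq hJ]
  rw [wedge_mulVec hJ, hwl, hml, zero_smul, one_smul, zero_sub] at hc
  have hc0 : c = 0 := by
    simpa [hwm, hlm] using (congrArg (· ⬝ᵥ J *ᵥ m) hc).symm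
  exact hw (by simpa [hc0] using hc)

lemma exists_orthogonal_add_wedge_mem [NeZero (2 : K)] (hll : l ⬝ᵥ J *ᵥ l = 0)
    (hlm : l ⬝ᵥ J *ᵥ m = 1) {Z : Matrix ι ι K} (hZ : Z ∈ skewAdjointMatricesLieSubalgebra J) :
    ∃ w, w ⬝ᵥ J *ᵥ l = 0 ∧ w ⬝ᵥ J *ᵥ m = 0 ∧
      Z + wedge J m w ∈ skewAdjointMatricesLieSubalgebra J ⊓ lineStabilizer l := by
  set c := Z *ᵥ l ⬝ᵥ J *ᵥ m
  have hwl : (Z *ᵥ l - c • l) ⬝ᵥ J *ᵥ l = 0 := by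
    rw [sub_dotProduct, smul_dotProduct, mulVec_dotProduct_mulVec_self_of_mem_skewAdjoint hJ hZ,
      hll, smul_zero, sub_zero]
  have hml : m ⬝ᵥ J *ᵥ l = 1 := by rwa [dotProduct_mulVec_comm_of_transpose_eq hJ]
  refine ⟨Z *ᵥ l - c • l, hwl, ?_,
    add_mem hZ (wedge_mem_skewAdjointMatricesLieSubalgebra hJ m _), c, ?_⟩
  · rw [sub_dotProduct, smul_dotProduct, hlm, smul_eq_mul, mul_one, sub_self]
  · rw [add_mulVec, wedge_mulVec hJ, hwl, hml, zero_smul, one_smul, zero_sub, ← sub_eq_add_neg,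
      sub_sub_cancel]

lemma wedge_mem_of_anisotropic_wedge_mem {h : LieSubalgebra K (Matrix ι ι K)}
    (hsim : skewAdjointMatricesLieSubalgebra J ⊓ lineStabilizer l ≤ h) {w₀ : ι → K}
    (hw₀l : w₀ ⬝ᵥ J *ᵥ l = 0) (hw₀m : w₀ ⬝ᵥ J *ᵥ m = 0) (hw₀ : w₀ ⬝ᵥ J *ᵥ w₀ ≠ 0)
    (hw₀h : wedge J m w₀ ∈ h) {x : ι → K} (hxl : x ⬝ᵥ J *ᵥ l = 0) (hxm : x ⬝ᵥ J *ᵥ m = 0) :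
    wedge J m x ∈ h := by
  have hxw₀ : wedge J x w₀ ∈ h := hsim ⟨wedge_mem_skewAdjointMatricesLieSubalgebra hJ x w₀, 0,
    by rw [wedge_mulVec hJ, hw₀l, hxl, zero_smul, zero_smul, sub_zero, zero_smul]⟩
  have hlie := h.lie_mem hxw₀ hw₀h
  rw [lie_wedge_wedge hJ hxm hw₀m] at hlie
  have hsmul : (w₀ ⬝ᵥ J *ᵥ w₀) • wedge J m x ∈ h := by
    simpa using h.add_mem hlie (h.smul_mem (x ⬝ᵥ J *ᵥ w₀) hw₀h)
  exact (Submodule.smul_mem_iff h.toSubmodule hw₀).mp hsmul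

theorem eq_skewAdjoint_inf_lineStabilizer_or_eq_skewAdjoint [NeZero (2 : K)]
    (hll : l ⬝ᵥ J *ᵥ l = 0) (hlm : l ⬝ᵥ J *ᵥ m = 1)
    (haniso : ∀ x, x ⬝ᵥ J *ᵥ l = 0 → x ⬝ᵥ J *ᵥ m = 0 → x ⬝ᵥ J *ᵥ x = 0 → x = 0)
    {h : LieSubalgebra K (Matrix ι ι K)}
    (hsim : skewAdjointMatricesLieSubalgebra J ⊓ lineStabilizer l ≤ h)
    (hso : h ≤ skewAdjointMatricesLieSubalgebra J) :
    h = skewAdjointMatricesLieSubalgebra J ⊓ lineStabilizer l ∨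
      h = skewAdjointMatricesLieSubalgebra J := by
  by_cases hstab : h ≤ lineStabilizer l
  · exact Or.inl (le_antisymm (le_inf hso hstab) hsim)
  obtain ⟨X, hXh, hX⟩ := SetLike.not_le_iff_exists.mp hstab
  obtain ⟨w₀, hw₀l, hw₀m, hXw₀⟩ := exists_orthogonal_add_wedge_mem hJ hll hlm (hso hXh)
  have hw₀h : wedge J m w₀ ∈ h := by simpa using h.sub_mem (hsim hXw₀) hXh
  have hw₀ : w₀ ⬝ᵥ J *ᵥ w₀ ≠ 0 := fun h0 ↦
    hX (by simpa [haniso w₀ hw₀l hw₀m h0, wedge] using hXw₀.2)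
  refine Or.inr (le_antisymm hso fun Z hZ ↦ ?_)
  obtain ⟨w, hwl, hwm, hZw⟩ := exists_orthogonal_add_wedge_mem hJ hll hlm hZ
  simpa using h.sub_mem (hsim hZw)
    (wedge_mem_of_anisotropic_wedge_mem hJ hsim hw₀l hw₀m hw₀ hw₀h hwl hwm)

end Field

end Matrix

section Minkowski

variable {n : ℕ}

lemma minkMat_transpose : (minkMat n)ᵀ = minkMat n := diagonal_transpose _

lemma minkMat_mulVec_minkMat_mulVec (v : Fin n → ℝ) : minkMat n *ᵥ minkMat n *ᵥ v = v := by
  ext i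
  by_cases hi : (i : ℕ) = 0 <;> simp [minkMat, mulVec_diagonal, hi]

lemma soSet_eq_coe_skewAdjointMatricesLieSubalgebra :
    soSet n = skewAdjointMatricesLieSubalgebra (minkMat n) := by
  ext X
  exact mem_skewAdjointMatricesLieSubalgebra_iff.symm

lemma simSet_eq_coe_inf_lineStabilizer (l : Fin n → ℝ) :
    simSet n l = ↑(skewAdjointMatricesLieSubalgebra (minkMat n) ⊓ lineStabilizer l) := by
  ext X
  rw [simSet, soSet_eq_coe_skewAdjointMatricesLieSubalgebra]
  rfl

lemma dotProduct_minkMat_mulVec (hn : 0 < n) (x y : Fin n → ℝ) :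
    x ⬝ᵥ minkMat n *ᵥ y = x ⬝ᵥ y - 2 * (x ⟨0, hn⟩ * y ⟨0, hn⟩) := by
  have hterm : ∀ i : Fin n, x i * ((if (i : ℕ) = 0 then -1 else 1) * y i) =
      x i * y i - if i = ⟨0, hn⟩ then 2 * (x i * y i) else 0 := by
    intro i
    split_ifs with h₁ h₂ h₂ <;> simp_all [Fin.ext_iff]
    ring
  simp only [minkMat, mulVec_diagonal, dotProduct, hterm, Finset.sum_sub_distrib,
    Finset.sum_ite_eq', Finset.mem_univ, if_true]

lemma eq_zero_of_minkMat_orthogonal_null {l x : Fin n → ℝ} (hl : l ≠ 0)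
    (hnull : l ⬝ᵥ minkMat n *ᵥ l = 0) (hxl : x ⬝ᵥ minkMat n *ᵥ l = 0) (hx_dot : x ⬝ᵥ l = 0)
    (hxx : x ⬝ᵥ minkMat n *ᵥ x = 0) : x = 0 := by
  have hn : 0 < n := Nat.pos_of_ne_zero (by rintro rfl; exact hl (Subsingleton.elim _ _))
  rw [dotProduct_minkMat_mulVec hn] at hnull hxl hxx
  have hl₀ : l ⟨0, hn⟩ ≠ 0 := fun h ↦ hl (dotProduct_self_eq_zero.mp (by simp_all))
  have hx₀ : x ⟨0, hn⟩ = 0 := by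
    have : x ⟨0, hn⟩ * l ⟨0, hn⟩ = 0 := by linarith
    exact (mul_eq_zero.mp this).resolve_right hl₀
  exact dotProduct_self_eq_zero.mp (by simpa [hx₀] using hxx)

end Minkowski

/-- `sim(n-2)` is a maximal proper Lie subalgebra of `so(n-1,1)`: it is a proper subalgebra,
and any Lie subalgebra `h` with `sim(n-2) ⊆ h ⊆ so(n-1,1)` equals `sim(n-2)` or `so(n-1,1)`. -/
theorem simSet_maximal_in_so (n : ℕ) (hn : 3 ≤ n) (l : Fin n → ℝ)
    (hl : l ≠ 0) (hnull : dotProduct l ((minkMat n).mulVec l) = 0)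
    (SO SIM : LieSubalgebra ℝ (Matrix (Fin n) (Fin n) ℝ))
    (hSO : (SO : Set (Matrix (Fin n) (Fin n) ℝ)) = soSet n)
    (hSIM : (SIM : Set (Matrix (Fin n) (Fin n) ℝ)) = simSet n l) :
    SIM ≠ SO ∧
      ∀ h : LieSubalgebra ℝ (Matrix (Fin n) (Fin n) ℝ),
        SIM ≤ h → h ≤ SO → h = SIM ∨ h = SO := by
  obtain rfl : SO = skewAdjointMatricesLieSubalgebra (minkMat n) :=
    SetLike.coe_injective (hSO.trans soSet_eq_coe_skewAdjointMatricesLieSubalgebra)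
  obtain rfl : SIM = skewAdjointMatricesLieSubalgebra (minkMat n) ⊓ lineStabilizer l :=
    SetLike.coe_injective (hSIM.trans (simSet_eq_coe_inf_lineStabilizer l))
  have hll : l ⬝ᵥ l ≠ 0 := fun h ↦ hl (dotProduct_self_eq_zero.mp h)
  set m := (l ⬝ᵥ l)⁻¹ • minkMat n *ᵥ l
  have hm : ∀ x, x ⬝ᵥ minkMat n *ᵥ m = (l ⬝ᵥ l)⁻¹ * (x ⬝ᵥ l) := fun x ↦ by
    rw [mulVec_smul, minkMat_mulVec_minkMat_mulVec, dotProduct_smul, smul_eq_mul]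
  have hlm : l ⬝ᵥ minkMat n *ᵥ m = 1 := by rw [hm, inv_mul_cancel₀ hll]
  obtain ⟨w, hw, hwl, hwm⟩ := exists_ne_zero_dotProduct_eq_zero_and_dotProduct_eq_zero
    (by rw [Fintype.card_fin]; omega) (minkMat n *ᵥ l) (minkMat n *ᵥ m)
  refine ⟨fun h ↦ not_skewAdjointMatricesLieSubalgebra_le_lineStabilizer minkMat_transpose hlm
    hw hwl hwm (inf_eq_left.mp h), fun h hsim hso ↦ ?_⟩
  refine eq_skewAdjoint_inf_lineStabilizer_or_eq_skewAdjoint minkMat_transpose hnull hlm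
    (fun x hxl hxm hxx ↦ ?_) hsim hso
  exact eq_zero_of_minkMat_orthogonal_null hl hnull hxl (by simpa [hm, hll] using hxm) hxx
end

section
/- Let n ≥ 3. The stabilizer of a nonzero null vector ℓ in the group SO(n−1,1) = {A ∈ GL(n,ℝ) : AᵀηA = η and det A = 1}, i.e. the subgroup {A ∈ SO(n−1,1) : Aℓ = ℓ}, is isomorphic as a group to the semidirect product ℝ^{n−2} ⋊ SO(n−2), where SO(n−2) = {O ∈ GL(n−2,ℝ) : OᵀO = 1, det O = 1} acts on ℝ^{n−2} by its standard linear action (the Euclidean group ISO(n−2)). -/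
/-!
Complete the null vector `ℓ` to a basis `(ℓ, k, e₁, …, e_{n-2})` with `k` null, `⟨ℓ, k⟩ = 1` and the
`eⱼ` orthonormal and orthogonal to `ℓ` and `k`. In this basis `η` becomes the light-cone form
`J = [[0, 1], [1, 0]] ⊕ 1`, so the stabilizer of `ℓ` is conjugate to the stabilizer of the first
basis vector in `SO(J)`. A `J`-isometry fixing that vector also fixes the covector `J e₀`, and the
remaining equations say exactly that it is a product `T(c) · R(D)` of a null rotation `T(c)`,
`c ∈ ℝ^{n-2}`, and a rotation `R(D) = 1 ⊕ D`, `D ∈ SO(n-2)`, with `(c, D)` unique. The null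
rotations form a copy of `ℝ^{n-2}` on which `R(D)` acts by conjugation as `c ↦ D c`.
-/

open Matrix

noncomputable def stdAddAut {m : ℕ} (O : GL (Fin m) ℝ) : AddAut (Fin m → ℝ) where
  toFun v := (O : Matrix (Fin m) (Fin m) ℝ).mulVec v
  invFun v := ((O⁻¹ : GL (Fin m) ℝ) : Matrix (Fin m) (Fin m) ℝ).mulVec v
  left_inv v := by
    show ((O⁻¹ : GL (Fin m) ℝ) : Matrix (Fin m) (Fin m) ℝ) *ᵥ
        ((O : Matrix (Fin m) (Fin m) ℝ) *ᵥ v) = v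
    rw [Matrix.mulVec_mulVec, Units.inv_mul, Matrix.one_mulVec]
  right_inv v := by
    show ((O : GL (Fin m) ℝ) : Matrix (Fin m) (Fin m) ℝ) *ᵥ
        (((O⁻¹ : GL (Fin m) ℝ) : Matrix (Fin m) (Fin m) ℝ) *ᵥ v) = v
    rw [Matrix.mulVec_mulVec, Units.mul_inv, Matrix.one_mulVec]
  map_add' u v := Matrix.mulVec_add _ u v

lemma stdAddAut_mul {m : ℕ} (O O' : GL (Fin m) ℝ) :
    stdAddAut (O * O') = stdAddAut O + stdAddAut O' := by
  refine AddEquiv.ext fun v => ?_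
  show ((O * O' : GL (Fin m) ℝ) : Matrix (Fin m) (Fin m) ℝ) *ᵥ v
      = (O : Matrix (Fin m) (Fin m) ℝ) *ᵥ ((O' : Matrix (Fin m) (Fin m) ℝ) *ᵥ v)
  rw [Matrix.mulVec_mulVec]
  rfl

noncomputable def stdAction {m : ℕ} (G : Subgroup (GL (Fin m) ℝ)) :
    G →* MulAut (Multiplicative (Fin m → ℝ)) where
  toFun O := AddEquiv.toMultiplicative (stdAddAut (O : GL (Fin m) ℝ))
  map_one' := by
    refine MulEquiv.ext fun v => ?_
    show (stdAddAut ((1 : G) : GL (Fin m) ℝ)) v.toAdd = v.toAdd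
    show ((1 : GL (Fin m) ℝ) : Matrix (Fin m) (Fin m) ℝ) *ᵥ v.toAdd = v.toAdd
    rw [Units.val_one, Matrix.one_mulVec]
  map_mul' O O' := by
    refine MulEquiv.ext fun v => ?_
    show (stdAddAut (((O * O' : G)) : GL (Fin m) ℝ)) v.toAdd
        = (stdAddAut (O : GL (Fin m) ℝ)) ((stdAddAut (O' : GL (Fin m) ℝ)) v.toAdd)
    rw [show ((O * O' : G) : GL (Fin m) ℝ) = (O : GL (Fin m) ℝ) * (O' : GL (Fin m) ℝ) from rfl,
      stdAddAut_mul]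
    rfl

section StabilizerSO

variable {ι κ R : Type*} [Fintype ι] [DecidableEq ι] [Fintype κ] [DecidableEq κ] [CommRing R]

def stabilizerSO (G : Matrix ι ι R) (v : ι → R) : Subgroup (GL ι R) where
  carrier := {A | (A : Matrix ι ι R)ᵀ * G * A = G ∧ (A : Matrix ι ι R).det = 1 ∧
    (A : Matrix ι ι R) *ᵥ v = v}
  one_mem' := by simp
  mul_mem' := by
    rintro A B ⟨hAG, hAdet, hAv⟩ ⟨hBG, hBdet, hBv⟩
    refine ⟨?_, ?_, ?_⟩
    · calc ((A * B : GL ι R) : Matrix ι ι R)ᵀ * G * (A * B : GL ι R)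
          = (B : Matrix ι ι R)ᵀ * ((A : Matrix ι ι R)ᵀ * G * A) * B := by
            simp only [Units.val_mul, transpose_mul, Matrix.mul_assoc]
        _ = G := by rw [hAG, hBG]
    · rw [Units.val_mul, det_mul, hAdet, hBdet, one_mul]
    · rw [Units.val_mul, ← mulVec_mulVec, hBv, hAv]
  inv_mem' := by
    rintro A ⟨hAG, hAdet, hAv⟩
    refine ⟨?_, ?_, ?_⟩
    · calc ((A⁻¹ : GL ι R) : Matrix ι ι R)ᵀ * G * (A⁻¹ : GL ι R)
          = ((A⁻¹ : GL ι R) : Matrix ι ι R)ᵀ * ((A : Matrix ι ι R)ᵀ * G * A) * (A⁻¹ : GL ι R) := by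
            rw [hAG]
        _ = ((A * A⁻¹ : GL ι R) : Matrix ι ι R)ᵀ * G * (A * A⁻¹ : GL ι R) := by
            simp only [Units.val_mul, transpose_mul, Matrix.mul_assoc]
        _ = G := by simp
    · simp [hAdet]
    · rw [← hAv, mulVec_mulVec, Units.inv_mul, one_mulVec, hAv]

theorem mem_stabilizerSO {G : Matrix ι ι R} {v : ι → R} {A : GL ι R} :
    A ∈ stabilizerSO G v ↔ (A : Matrix ι ι R)ᵀ * G * A = G ∧ (A : Matrix ι ι R).det = 1 ∧
      (A : Matrix ι ι R) *ᵥ v = v :=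
  Iff.rfl

theorem conj_mem_stabilizerSO_iff {G : Matrix ι ι R} {v w : ι → R} (P : GL ι R)
    (hw : (P : Matrix ι ι R) *ᵥ w = v) (A : GL ι R) :
    MulAut.conj P⁻¹ A ∈ stabilizerSO ((P : Matrix ι ι R)ᵀ * G * (P : Matrix ι ι R)) w ↔
      A ∈ stabilizerSO G v := by
  set p : Matrix ι ι R := (P : Matrix ι ι R)
  set q : Matrix ι ι R := ((P⁻¹ : GL ι R) : Matrix ι ι R)
  set a : Matrix ι ι R := (A : Matrix ι ι R)
  have hpq : p * q = 1 := Units.mul_inv P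
  have hqp : q * p = 1 := Units.inv_mul P
  have hconj : ((MulAut.conj P⁻¹ A : GL ι R) : Matrix ι ι R) = q * a * p := by simp [p, q, a]
  have hform : (q * a * p)ᵀ * (pᵀ * G * p) * (q * a * p) = pᵀ * (aᵀ * G * a) * p := by
    calc _ = pᵀ * aᵀ * (p * q)ᵀ * G * (p * q) * a * p := by
          simp only [transpose_mul, Matrix.mul_assoc]
      _ = _ := by simp [hpq, Matrix.mul_assoc]
  have hvec : (q * a * p) *ᵥ w = q *ᵥ (a *ᵥ v) := by rw [← mulVec_mulVec, ← mulVec_mulVec, hw]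
  have hw' : w = q *ᵥ v := by rw [← hw, mulVec_mulVec, hqp, one_mulVec]
  rw [mem_stabilizerSO, mem_stabilizerSO, hconj, hform]
  refine and_congr ?_ (and_congr ?_ ?_)
  · exact P.isUnit.mul_left_inj.trans ((isUnit_transpose _).2 P.isUnit).mul_right_inj
  · rw [det_units_conj']
  · rw [hvec, hw']
    exact (mulVec_injective_of_isUnit (P⁻¹).isUnit).eq_iff

theorem transpose_mulVec_mulVec_of_mem_stabilizerSO {G : Matrix ι ι R} {v : ι → R} {A : GL ι R}
    (hA : A ∈ stabilizerSO G v) : (A : Matrix ι ι R)ᵀ *ᵥ (G *ᵥ v) = G *ᵥ v := by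
  obtain ⟨hG, -, hv⟩ := hA
  calc _ = ((A : Matrix ι ι R)ᵀ * G * (A : Matrix ι ι R)) *ᵥ v := by
        rw [← mulVec_mulVec, hv, ← mulVec_mulVec]
    _ = G *ᵥ v := by rw [hG]

noncomputable def reindexGL (e : ι ≃ κ) : GL ι R ≃* GL κ R :=
  Units.mapEquiv (reindexAlgEquiv R R e).toMulEquiv

theorem reindexGL_symm_mem_stabilizerSO_iff {G : Matrix ι ι R} {v : ι → R} (e : κ ≃ ι)
    (A : GL ι R) :
    reindexGL e.symm A ∈ stabilizerSO (G.submatrix e e) (v ∘ e) ↔ A ∈ stabilizerSO G v := by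
  have hA : ((reindexGL e.symm A : GL κ R) : Matrix κ κ R) = (A : Matrix ι ι R).submatrix e e :=
    rfl
  have hsub : Function.Injective fun M : Matrix ι ι R => M.submatrix e e :=
    (reindex e.symm e.symm).injective
  rw [mem_stabilizerSO, mem_stabilizerSO, hA, transpose_submatrix, submatrix_mul_equiv,
    submatrix_mul_equiv, det_submatrix_equiv_self, submatrix_mulVec_equiv]
  refine and_congr hsub.eq_iff (and_congr Iff.rfl ?_)
  simpa [Function.comp_assoc] using e.surjective.injective_comp_right.eq_iff

end StabilizerSO

section LightCone

variable {m : ℕ}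

def lightConeForm (m : ℕ) : Matrix (Fin 2 ⊕ Fin m) (Fin 2 ⊕ Fin m) ℝ :=
  fromBlocks !![0, 1; 1, 0] 0 0 1

-- In the basis `(ℓ, k, e)`: `ℓ ↦ ℓ`, `k ↦ k - ½|c|² ℓ - c`, `eⱼ ↦ eⱼ + cⱼ ℓ`.
noncomputable def nullRotation (c : Fin m → ℝ) : Matrix (Fin 2 ⊕ Fin m) (Fin 2 ⊕ Fin m) ℝ :=
  fromBlocks !![1, -(c ⬝ᵥ c) / 2; 0, 1] (of ![c, 0]) (of fun i => ![0, -c i]) 1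

def spatialRotation (D : Matrix (Fin m) (Fin m) ℝ) : Matrix (Fin 2 ⊕ Fin m) (Fin 2 ⊕ Fin m) ℝ :=
  fromBlocks 1 0 0 D

theorem nullRotation_zero : nullRotation (0 : Fin m → ℝ) = 1 := by
  rw [nullRotation, ← fromBlocks_one]
  congr
  · ext i j; fin_cases i <;> fin_cases j <;> simp
  · ext i j; fin_cases i <;> simp
  · ext i j; fin_cases j <;> simp

theorem nullRotation_add (c c' : Fin m → ℝ) :
    nullRotation (c + c') = nullRotation c * nullRotation c' := by
  rw [nullRotation, nullRotation, nullRotation, fromBlocks_multiply]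
  congr 1
  · ext i j
    fin_cases i <;> fin_cases j <;> simp [vecMul, ← Pi.neg_def, dotProduct_add,
      add_dotProduct, dotProduct_comm c' c]
    ring
  · ext i j; fin_cases i <;> simp [add_comm]
  · ext i j; fin_cases j <;> simp [mul_apply, Fin.sum_univ_two, add_comm]
  · ext i j; simp [mul_apply, Fin.sum_univ_two]

theorem spatialRotation_mul (D D' : Matrix (Fin m) (Fin m) ℝ) :
    spatialRotation (D * D') = spatialRotation D * spatialRotation D' := by
  simp [spatialRotation, fromBlocks_multiply]

theorem nullRotation_mul_spatialRotation (c : Fin m → ℝ) (D : Matrix (Fin m) (Fin m) ℝ) :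
    nullRotation c * spatialRotation D =
      fromBlocks !![1, -(c ⬝ᵥ c) / 2; 0, 1] (of ![c ᵥ* D, 0]) (of fun i => ![0, -c i]) D := by
  rw [nullRotation, spatialRotation, fromBlocks_multiply]
  congr 1
  · simp
  · ext i j; fin_cases i <;> simp [vecMul, dotProduct]
  · simp
  · simp

theorem spatialRotation_mul_nullRotation {D : Matrix (Fin m) (Fin m) ℝ} (hD : Dᵀ * D = 1)
    (c : Fin m → ℝ) :
    spatialRotation D * nullRotation c = nullRotation (D *ᵥ c) * spatialRotation D := by
  have hc : (D *ᵥ c) ᵥ* D = c := by rw [vecMul_mulVec, hD, vecMul_one]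
  rw [nullRotation_mul_spatialRotation, hc, dotProduct_mulVec, hc, spatialRotation, nullRotation,
    fromBlocks_multiply]
  congr 1
  · simp
  · simp
  · ext i j; fin_cases j <;> simp [mul_apply, mulVec, dotProduct]
  · simp

theorem transpose_mul_lightConeForm_mul_apply {κ : Type*} (M : Matrix (Fin 2 ⊕ Fin m) κ ℝ)
    (a b : κ) :
    (Mᵀ * lightConeForm m * M) a b = M (.inl 1) a * M (.inl 0) b + M (.inl 0) a * M (.inl 1) b +
      ∑ k, M (.inr k) a * M (.inr k) b := by
  simp [lightConeForm, mul_apply, Fintype.sum_sum_type, Fin.sum_univ_two, one_apply]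

theorem lightConeForm_mulVec_single :
    lightConeForm m *ᵥ Pi.single (.inl 0) 1 = Pi.single (.inl 1) 1 := by
  ext (i | i)
  · fin_cases i <;> simp [lightConeForm]
  · simp [lightConeForm]

theorem det_lightConeForm (m : ℕ) : (lightConeForm m).det = -1 := by
  simp [lightConeForm, det_fin_two]

noncomputable def nullRotationHom (m : ℕ) : Multiplicative (Fin m → ℝ) →* GL (Fin 2 ⊕ Fin m) ℝ :=
  MonoidHom.toHomUnits
    { toFun := fun c => nullRotation c.toAdd
      map_one' := nullRotation_zero
      map_mul' := fun c c' => nullRotation_add c.toAdd c'.toAdd }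

noncomputable def spatialRotationHom (m : ℕ) : GL (Fin m) ℝ →* GL (Fin 2 ⊕ Fin m) ℝ :=
  Units.map
    { toFun := spatialRotation
      map_one' := fromBlocks_one
      map_mul' := spatialRotation_mul }

theorem transpose_nullRotation_mul_lightConeForm_mul (c : Fin m → ℝ) :
    (nullRotation c)ᵀ * lightConeForm m * nullRotation c = lightConeForm m := by
  ext (a | a) (b | b) <;> rw [transpose_mul_lightConeForm_mul_apply]
  · fin_cases a <;> fin_cases b <;> simp [nullRotation, lightConeForm, dotProduct]
  · fin_cases a <;> simp [nullRotation, lightConeForm, one_apply]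
  · fin_cases b <;> simp [nullRotation, lightConeForm, one_apply]
  · simp [nullRotation, lightConeForm, one_apply, eq_comm]

theorem det_nullRotation (c : Fin m → ℝ) : (nullRotation c).det = 1 := by
  simp [nullRotation, det_fromBlocks_one₂₂, det_fin_two, vecHead, vecMul, dotProduct]

theorem nullRotation_mulVec_single (c : Fin m → ℝ) :
    nullRotation c *ᵥ Pi.single (.inl 0) 1 = Pi.single (.inl 0) 1 := by
  ext (i | i)
  · fin_cases i <;> simp [nullRotation]
  · simp [nullRotation]

theorem transpose_spatialRotation_mul_lightConeForm_mul {D : Matrix (Fin m) (Fin m) ℝ}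
    (hD : Dᵀ * D = 1) :
    (spatialRotation D)ᵀ * lightConeForm m * spatialRotation D = lightConeForm m := by
  simp [spatialRotation, lightConeForm, fromBlocks_transpose, fromBlocks_multiply, hD]

theorem det_spatialRotation (D : Matrix (Fin m) (Fin m) ℝ) : (spatialRotation D).det = D.det := by
  simp [spatialRotation, det_fromBlocks_zero₂₁]

theorem spatialRotation_mulVec_single (D : Matrix (Fin m) (Fin m) ℝ) :
    spatialRotation D *ᵥ Pi.single (.inl 0) 1 = Pi.single (.inl 0) 1 := by
  ext (i | i)
  · fin_cases i <;> simp [spatialRotation]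
  · simp [spatialRotation]

theorem nullRotationHom_mem_stabilizerSO (c : Multiplicative (Fin m → ℝ)) :
    nullRotationHom m c ∈ stabilizerSO (lightConeForm m) (Pi.single (.inl 0) 1) :=
  ⟨transpose_nullRotation_mul_lightConeForm_mul _, det_nullRotation _,
    nullRotation_mulVec_single _⟩

theorem spatialRotationHom_mem_stabilizerSO {O : GL (Fin m) ℝ}
    (hO : (O : Matrix (Fin m) (Fin m) ℝ)ᵀ * O = 1) (hdet : (O : Matrix (Fin m) (Fin m) ℝ).det = 1) :
    spatialRotationHom m O ∈ stabilizerSO (lightConeForm m) (Pi.single (.inl 0) 1) :=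
  ⟨transpose_spatialRotation_mul_lightConeForm_mul hO, (det_spatialRotation _).trans hdet,
    spatialRotation_mulVec_single _⟩

theorem exists_eq_nullRotation_mul_spatialRotation {A : GL (Fin 2 ⊕ Fin m) ℝ}
    (hA : A ∈ stabilizerSO (lightConeForm m) (Pi.single (.inl 0) 1)) :
    ∃ c D, Dᵀ * D = 1 ∧ D.det = 1 ∧
      (A : Matrix (Fin 2 ⊕ Fin m) (Fin 2 ⊕ Fin m) ℝ) = nullRotation c * spatialRotation D := by
  have hrow := transpose_mulVec_mulVec_of_mem_stabilizerSO hA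
  obtain ⟨hJ, hdet, hcol⟩ := hA
  set M : Matrix (Fin 2 ⊕ Fin m) (Fin 2 ⊕ Fin m) ℝ := (A : Matrix (Fin 2 ⊕ Fin m) (Fin 2 ⊕ Fin m) ℝ)
  rw [lightConeForm_mulVec_single] at hrow
  have hcol' (i) : M i (.inl 0) = Pi.single (M := fun _ => ℝ) (.inl 0) 1 i := by
    simpa using congrFun hcol i
  have hrow' (j) : M (.inl 1) j = Pi.single (M := fun _ => ℝ) (.inl 1) 1 j := by
    simpa using congrFun hrow j
  have hJ' (a b) : M (.inl 1) a * M (.inl 0) b + M (.inl 0) a * M (.inl 1) b +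
      ∑ k, M (.inr k) a * M (.inr k) b = lightConeForm m a b := by
    rw [← transpose_mul_lightConeForm_mul_apply, hJ]
  set c : Fin m → ℝ := fun i => -M (.inr i) (.inl 1)
  set D : Matrix (Fin m) (Fin m) ℝ := M.toBlocks₂₂
  have hD : Dᵀ * D = 1 := by
    ext i j
    simpa [hrow', mul_apply, lightConeForm, D, toBlocks₂₂] using hJ' (.inr i) (.inr j)
  have h01 : M (.inl 0) (.inl 1) = -(c ⬝ᵥ c) / 2 := by
    have h := hJ' (.inl 1) (.inl 1)
    simp only [hrow', Pi.single_eq_same, one_mul, mul_one, lightConeForm, fromBlocks_apply₁₁,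
      of_apply, cons_val', cons_val_one, cons_val_fin_one] at h
    simp only [c, dotProduct, neg_mul_neg]
    linarith
  have h0j (j) : M (.inl 0) (.inr j) = (c ᵥ* D) j := by
    have h := hJ' (.inl 1) (.inr j)
    simp only [hrow', Pi.single_eq_same, one_mul, ne_eq, reduceCtorEq, not_false_eq_true,
      Pi.single_eq_of_ne, mul_zero, add_zero, lightConeForm, fromBlocks_apply₁₂,
      Matrix.zero_apply] at h
    simp only [c, D, vecMul, dotProduct, toBlocks₂₂, of_apply, neg_mul, Finset.sum_neg_distrib]
    linarith
  have hM : M = nullRotation c * spatialRotation D := by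
    rw [nullRotation_mul_spatialRotation]
    ext (a | a) (b | b)
    · fin_cases a <;> fin_cases b <;> simp [hcol', hrow', h01]
    · fin_cases a <;> simp [h0j, hrow']
    · fin_cases b <;> simp [hcol', c]
    · rfl
  refine ⟨c, D, hD, ?_, hM⟩
  rwa [hM, det_mul, det_nullRotation, det_spatialRotation, one_mul] at hdet

end LightCone

section Euclidean

variable {m : ℕ}

theorem spatialRotationHom_mul_nullRotationHom {O : GL (Fin m) ℝ}
    (hO : (O : Matrix (Fin m) (Fin m) ℝ)ᵀ * O = 1) (c : Multiplicative (Fin m → ℝ)) :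
    spatialRotationHom m O * nullRotationHom m c =
      nullRotationHom m (.ofAdd ((O : Matrix (Fin m) (Fin m) ℝ) *ᵥ c.toAdd)) *
        spatialRotationHom m O :=
  Units.ext (spatialRotation_mul_nullRotation hO c.toAdd)

theorem nullRotation_mul_spatialRotation_eq_one {c : Fin m → ℝ} {D : Matrix (Fin m) (Fin m) ℝ}
    (h : nullRotation c * spatialRotation D = 1) : c = 0 ∧ D = 1 := by
  rw [nullRotation_mul_spatialRotation, ← fromBlocks_one, fromBlocks_inj] at h
  obtain ⟨-, -, hC, hD⟩ := h
  exact ⟨funext fun i => by simpa using congrFun₂ hC i 1, hD⟩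

variable (G : Subgroup (GL (Fin m) ℝ))

noncomputable def nullRotationLift (hG : ∀ O ∈ G, (O : Matrix (Fin m) (Fin m) ℝ)ᵀ * O = 1) :
    Multiplicative (Fin m → ℝ) ⋊[stdAction G] G →* GL (Fin 2 ⊕ Fin m) ℝ :=
  SemidirectProduct.lift (nullRotationHom m) ((spatialRotationHom m).comp G.subtype)
    fun O => MonoidHom.ext fun c => by
      simp only [MonoidHom.comp_apply, MulEquiv.coe_toMonoidHom, MulAut.conj_apply]
      rw [eq_mul_inv_iff_mul_eq]
      exact (spatialRotationHom_mul_nullRotationHom (hG O O.2) c).symm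

theorem nullRotationLift_injective (hG : ∀ O ∈ G, (O : Matrix (Fin m) (Fin m) ℝ)ᵀ * O = 1) :
    Function.Injective (nullRotationLift G hG) := by
  refine (injective_iff_map_eq_one _).2 fun x hx => ?_
  obtain ⟨hc, hD⟩ := nullRotation_mul_spatialRotation_eq_one (congrArg Units.val hx)
  exact SemidirectProduct.ext hc (Subtype.ext (Units.ext hD))

theorem range_nullRotationLift
    (hSO : ∀ O : GL (Fin m) ℝ, O ∈ G ↔
      (O : Matrix (Fin m) (Fin m) ℝ)ᵀ * O = 1 ∧ (O : Matrix (Fin m) (Fin m) ℝ).det = 1) :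
    (nullRotationLift G fun O hO => ((hSO O).1 hO).1).range =
      stabilizerSO (lightConeForm m) (Pi.single (.inl 0) 1) := by
  ext A
  constructor
  · rintro ⟨x, rfl⟩
    obtain ⟨hO, hdet⟩ := (hSO _).1 x.right.2
    exact mul_mem (nullRotationHom_mem_stabilizerSO _) (spatialRotationHom_mem_stabilizerSO hO hdet)
  · intro hA
    obtain ⟨c, D, hD, hdet, hAD⟩ := exists_eq_nullRotation_mul_spatialRotation hA
    let O : GL (Fin m) ℝ := ⟨D, Dᵀ, mul_eq_one_comm.mp hD, hD⟩
    exact ⟨⟨.ofAdd c, O, (hSO O).2 ⟨hD, hdet⟩⟩, Units.ext hAD.symm⟩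

end Euclidean

section Minkowski

open scoped EuclideanSpace

variable {m : ℕ}

theorem of_mul_mul_transpose_of_apply {ι κ R : Type*} [Fintype ι] [CommSemiring R]
    (f : κ → ι → R) (G : Matrix ι ι R) (a b : κ) :
    (of f * G * (of f)ᵀ) a b = f a ⬝ᵥ G *ᵥ f b := by
  rw [dotProduct_mulVec]
  rfl

theorem cons_dotProduct_minkMat_mulVec_cons (a b : ℝ) (v w : Fin (m + 1) → ℝ) :
    Fin.cons a v ⬝ᵥ minkMat (m + 2) *ᵥ Fin.cons b w = -(a * b) + v ⬝ᵥ w := by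
  simp [minkMat, mulVec_diagonal, dotProduct, Fin.sum_univ_succ]

theorem exists_orthonormal_rows_mulVec_eq_zero {v : Fin (m + 1) → ℝ} (hv : v ≠ 0) :
    ∃ B : Matrix (Fin m) (Fin (m + 1)) ℝ, B * Bᵀ = 1 ∧ B *ᵥ v = 0 := by
  have hv' : WithLp.toLp 2 v ≠ 0 := by simpa using hv
  let b := OrthonormalBasis.fromOrthogonalSpanSingleton (𝕜 := ℝ) m hv'
  refine ⟨of fun j => WithLp.ofLp (b j : EuclideanSpace ℝ (Fin (m + 1))), ?_, ?_⟩
  · ext i j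
    have h := orthonormal_iff_ite.mp b.orthonormal i j
    rw [Submodule.coe_inner, EuclideanSpace.inner_eq_star_dotProduct] at h
    simpa [mul_apply, one_apply, dotProduct, mul_comm] using h
  · ext j
    have h := Submodule.mem_orthogonal_singleton_iff_inner_right.mp (b j).2
    rw [EuclideanSpace.inner_eq_star_dotProduct] at h
    simpa [mulVec] using h

theorem exists_lightConeFrame {l : Fin (m + 2) → ℝ} (hl : l ≠ 0)
    (hnull : l ⬝ᵥ minkMat (m + 2) *ᵥ l = 0) :
    ∃ f : Fin 2 ⊕ Fin m → Fin (m + 2) → ℝ,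
      of f * minkMat (m + 2) * (of f)ᵀ = lightConeForm m ∧ f (.inl 0) = l := by
  obtain ⟨l0, lv, rfl⟩ : ∃ l0 lv, l = Fin.cons l0 lv := ⟨_, _, (Fin.cons_self_tail l).symm⟩
  rw [cons_dotProduct_minkMat_mulVec_cons] at hnull
  have hlv : lv ⬝ᵥ lv = l0 * l0 := by linarith
  have hl0 : l0 ≠ 0 := by
    rintro rfl
    rw [mul_zero, dotProduct_self_eq_zero] at hlv
    exact hl (by rw [hlv]; exact Matrix.cons_zero_zero)
  have hlv0 : lv ≠ 0 := by
    rintro rfl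
    exact hl0 (mul_self_eq_zero.mp (by simpa using hlv.symm))
  obtain ⟨B, hBB, hBv⟩ := exists_orthonormal_rows_mulVec_eq_zero hlv0
  have hBlv (j) : lv ⬝ᵥ B j = 0 := by rw [dotProduct_comm]; exact congrFun hBv j
  -- `k = s • η ℓ` is null and, as `η² = 1`, `⟨ℓ, k⟩ = s ⟪ℓ, ℓ⟫ = s · 2ℓ₀² = 1`.
  set s : ℝ := (2 * (l0 * l0))⁻¹
  refine ⟨Sum.elim ![Fin.cons l0 lv, Fin.cons (-(s * l0)) (s • lv)] fun j => Fin.cons 0 (B j),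
    ?_, rfl⟩
  ext (a | a) (b | b) <;> rw [of_mul_mul_transpose_of_apply]
  · fin_cases a <;> fin_cases b <;>
      simp [cons_dotProduct_minkMat_mulVec_cons, hlv, lightConeForm, s] <;> field_simp <;> ring
  · fin_cases a <;> simp [cons_dotProduct_minkMat_mulVec_cons, hBlv, lightConeForm]
  · fin_cases b <;>
      simp [cons_dotProduct_minkMat_mulVec_cons, dotProduct_comm _ lv, hBlv, lightConeForm]
  · simp only [Sum.elim_inr, cons_dotProduct_minkMat_mulVec_cons, lightConeForm,
      fromBlocks_apply₂₂, ← hBB]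
    simp [mul_apply, dotProduct]

end Minkowski

theorem nonempty_stabilizerSO_minkMat_mulEquiv {m : ℕ} {l : Fin (m + 2) → ℝ} (hl : l ≠ 0)
    (hnull : l ⬝ᵥ minkMat (m + 2) *ᵥ l = 0) :
    Nonempty (stabilizerSO (minkMat (m + 2)) l ≃*
      stabilizerSO (lightConeForm m) (Pi.single (.inl 0) 1)) := by
  obtain ⟨f, hf, hfl⟩ := exists_lightConeFrame hl hnull
  let ε : Fin 2 ⊕ Fin m ≃ Fin (m + 2) := finSumFinEquiv.trans (finCongr (Nat.add_comm 2 m))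
  let P : Matrix (Fin 2 ⊕ Fin m) (Fin 2 ⊕ Fin m) ℝ := ((of f).submatrix id ε)ᵀ
  have hPJ : Pᵀ * (minkMat (m + 2)).submatrix ε ε * P = lightConeForm m := by
    simp [P, transpose_submatrix, hf]
  have hPdet : P.det ≠ 0 := by
    intro h
    have := congrArg det hPJ
    rw [det_mul, det_mul, det_transpose, h, det_lightConeForm] at this
    norm_num at this
  let Q := GeneralLinearGroup.mkOfDetNeZero P hPdet
  have hQl : (Q : Matrix (Fin 2 ⊕ Fin m) (Fin 2 ⊕ Fin m) ℝ) *ᵥ Pi.single (.inl 0) 1 = l ∘ ε := by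
    ext i
    simp [Q, P, GeneralLinearGroup.mkOfDetNeZero, hfl]
  let φ := (reindexGL ε.symm).trans (MulAut.conj Q⁻¹)
  have hφ (A : GL (Fin (m + 2)) ℝ) :
      φ A ∈ stabilizerSO (lightConeForm m) (Pi.single (.inl 0) 1) ↔
        A ∈ stabilizerSO (minkMat (m + 2)) l := by
    rw [← hPJ, MulEquiv.trans_apply]
    exact (conj_mem_stabilizerSO_iff Q hQl _).trans (reindexGL_symm_mem_stabilizerSO_iff ε A)
  exact ⟨(φ.subgroupMap _).trans (MulEquiv.subgroupCongr (by
    ext B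
    obtain ⟨A, rfl⟩ := φ.surjective B
    exact (Subgroup.mem_map_iff_mem φ.injective).trans (hφ A).symm))⟩

/-- The stabilizer `{A ∈ SO(n-1,1) : Aℓ = ℓ}` of a nonzero null vector `ℓ` in the Lorentz
group `SO(n-1,1) = {A : AᵀηA = η, det A = 1}` is isomorphic, as a group, to the semidirect
product `ℝ^{n-2} ⋊ SO(n-2)` (the Euclidean group `ISO(n-2)`), where
`SO(n-2) = {O : OᵀO = 1, det O = 1}` acts on `ℝ^{n-2}` by its standard linear action. -/
theorem lorentz_null_stabilizer_iso_euclidean (n : ℕ) (hn : 3 ≤ n) (l : Fin n → ℝ)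
    (hl : l ≠ 0) (hnull : dotProduct l ((minkMat n).mulVec l) = 0)
    (St : Subgroup (GL (Fin n) ℝ))
    (hSt : ∀ A : GL (Fin n) ℝ, A ∈ St ↔
      ((A : Matrix (Fin n) (Fin n) ℝ)ᵀ * minkMat n * (A : Matrix (Fin n) (Fin n) ℝ) = minkMat n ∧
        (A : Matrix (Fin n) (Fin n) ℝ).det = 1 ∧
        (A : Matrix (Fin n) (Fin n) ℝ).mulVec l = l))
    (SOg : Subgroup (GL (Fin (n - 2)) ℝ))
    (hSOg : ∀ O : GL (Fin (n - 2)) ℝ, O ∈ SOg ↔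
      ((O : Matrix (Fin (n - 2)) (Fin (n - 2)) ℝ)ᵀ * (O : Matrix (Fin (n - 2)) (Fin (n - 2)) ℝ) = 1 ∧
        (O : Matrix (Fin (n - 2)) (Fin (n - 2)) ℝ).det = 1)) :
    Nonempty (St ≃* (Multiplicative (Fin (n - 2) → ℝ)) ⋊[stdAction SOg] SOg) := by
  obtain ⟨m, rfl⟩ : ∃ m, n = m + 2 := ⟨n - 2, by omega⟩
  obtain ⟨e⟩ := nonempty_stabilizerSO_minkMat_mulEquiv hl hnull
  exact ⟨(MulEquiv.subgroupCongr (Subgroup.ext hSt)).trans <| e.trans <|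
    (MulEquiv.subgroupCongr (range_nullRotationLift SOg hSOg).symm).trans
      (MonoidHom.ofInjective (nullRotationLift_injective SOg _)).symm⟩
end
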